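/- arXiv:2603.14970 — 4 statements merged into one kernel-verified Lean document; each statement's English description precedes it below -/
import Mathlib

section
/- Let f : (X, x₀) → (Y, y₀) be a functor of pointed groupoids with homotopy fibre (F, x̃₀) at y₀. Then the sequence of pointed sets π₁(X, x₀) → π₁(Y, y₀) → π₀(F) → π₀(X) → π₀(Y) is exact, where the connecting map ∂ : π₁(Y, y₀) → π₀(F) sends an automorphism φ : y₀ ≅ y₀ to the class of (x₀, φ), the map π₀(F) → π₀(X) sends [(x, φ)] to [x], and exactness at a pointed set means the preimage of the basepoint class equals the image of the previous map. -/
/-!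
STATEMENT 1: For a functor of pointed groupoids `f : (X, x₀) → (Y, y₀)` with homotopy
fibre `(F, x̃₀)` at `y₀`, the sequence of pointed sets
`π₁(X, x₀) → π₁(Y, y₀) → π₀(F) → π₀(X) → π₀(Y)` is exact.
-/

open CategoryTheory

universe u₁ v₁ u₂ v₂

/-- The homotopy fibre of a functor of groupoids `f : X ⥤ Y` over a point `y₀ : Y`. -/
structure HomotopyFiber {X : Type u₁} {Y : Type u₂} [Groupoid.{v₁} X] [Groupoid.{v₂} Y]
    (f : X ⥤ Y) (y₀ : Y) where
  pt : X
  iso : y₀ ≅ f.obj pt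

namespace HomotopyFiber

variable {X : Type u₁} {Y : Type u₂} [Groupoid.{v₁} X] [Groupoid.{v₂} Y]
  (f : X ⥤ Y) (y₀ : Y)

instance : Category (HomotopyFiber f y₀) where
  Hom A B := { u : A.pt ⟶ B.pt // A.iso.hom ≫ f.map u = B.iso.hom }
  id A := ⟨𝟙 A.pt, by simp⟩
  comp u v := ⟨u.1 ≫ v.1, by rw [f.map_comp, ← Category.assoc, u.2, v.2]⟩
  id_comp := by intros; apply Subtype.ext; simp
  comp_id := by intros; apply Subtype.ext; simp
  assoc := by intros; apply Subtype.ext; simp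

/-- The canonical projection from the homotopy fibre to `X`. -/
def proj : HomotopyFiber f y₀ ⥤ X where
  obj A := A.pt
  map u := u.1

/-- The canonical basepoint `x̃₀ = (x₀, id_{y₀})`. -/
def base (x₀ : X) (h : f.obj x₀ = y₀) : HomotopyFiber f y₀ := ⟨x₀, eqToIso h.symm⟩

end HomotopyFiber

/-- `π₀` of a category: its set of isomorphism classes of objects. -/
def pi0 (C : Type u₁) [Category.{v₁} C] : Type u₁ := Quotient (isIsomorphicSetoid C)

/-- The class of an object in `π₀`. -/
def pi0.mk {C : Type u₁} [Category.{v₁} C] (x : C) : pi0 C :=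
  Quotient.mk (isIsomorphicSetoid C) x

/-- The map induced on `π₀` by a functor. -/
def pi0Map {C : Type u₁} {D : Type u₂} [Category.{v₁} C] [Category.{v₂} D] (f : C ⥤ D) :
    pi0 C → pi0 D :=
  Quot.map f.obj fun _ _ e => e.elim fun i => ⟨f.mapIso i⟩

/-!
An isomorphism `(x, φ) ≅ (x', φ')` in the homotopy fibre is the same as an isomorphism
`u : x ≅ x'` with `φ ≪≫ f u = φ'`. Each of the three exactness statements is then a matter of
solving such an identity for the missing isomorphism: `u` from `ψ` at `π₁(Y)`, `ψ := φ ≪≫ f i`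
at `π₀(F)`, and `φ := j⁻¹` from `j : f x ≅ y₀` at `π₀(X)`.
-/

lemma pi0.mk_eq_mk_iff {C : Type u₁} [Category.{v₁} C] {a b : C} :
    pi0.mk a = pi0.mk b ↔ Nonempty (a ≅ b) :=
  Quotient.eq

lemma pi0.mk_surjective {C : Type u₁} [Category.{v₁} C] : Function.Surjective (pi0.mk (C := C)) :=
  Quotient.mk_surjective

@[simp]
lemma pi0Map_mk {C : Type u₁} {D : Type u₂} [Category.{v₁} C] [Category.{v₂} D] (F : C ⥤ D)
    (x : C) : pi0Map F (pi0.mk x) = pi0.mk (F.obj x) :=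
  rfl

namespace HomotopyFiber

variable {X : Type u₁} {Y : Type u₂} [Groupoid.{v₁} X] [Groupoid.{v₂} Y] (f : X ⥤ Y) {y₀ : Y}

@[simp]
lemma proj_obj (A : HomotopyFiber f y₀) : (proj f y₀).obj A = A.pt :=
  rfl

def isoMk {A B : HomotopyFiber f y₀} (u : A.pt ≅ B.pt) (hu : A.iso ≪≫ f.mapIso u = B.iso) :
    A ≅ B where
  hom := ⟨u.hom, congrArg Iso.hom hu⟩
  inv := ⟨u.inv, by rw [← hu]; simp⟩
  hom_inv_id := Subtype.ext u.hom_inv_id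
  inv_hom_id := Subtype.ext u.inv_hom_id

lemma nonempty_iso_iff {A B : HomotopyFiber f y₀} :
    Nonempty (A ≅ B) ↔ ∃ u : A.pt ≅ B.pt, A.iso ≪≫ f.mapIso u = B.iso :=
  ⟨fun ⟨e⟩ => ⟨(proj f y₀).mapIso e, Iso.ext e.hom.2⟩, fun ⟨u, hu⟩ => ⟨isoMk f u hu⟩⟩

def boundary (x₀ : X) (e : f.obj x₀ ≅ y₀) (ψ : y₀ ≅ y₀) : pi0 (HomotopyFiber f y₀) :=
  pi0.mk ⟨x₀, ψ ≪≫ e.symm⟩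

lemma boundary_preimage_base (x₀ : X) (e : f.obj x₀ ≅ y₀) :
    boundary f x₀ e ⁻¹' {pi0.mk ⟨x₀, e.symm⟩} =
      Set.range fun u : x₀ ≅ x₀ => e.symm ≪≫ f.mapIso u ≪≫ e := by
  ext ψ
  simp only [Set.mem_preimage, Set.mem_singleton_iff, boundary, pi0.mk_eq_mk_iff,
    nonempty_iso_iff]
  constructor
  · rintro ⟨u, hu⟩
    refine ⟨u.symm, ?_⟩
    rw [← hu]
    ext
    simp
  · rintro ⟨u, rfl⟩
    exact ⟨u.symm, by ext; simp⟩

lemma range_boundary (x₀ : X) (e : f.obj x₀ ≅ y₀) :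
    Set.range (boundary f x₀ e) = pi0Map (proj f y₀) ⁻¹' {pi0.mk x₀} := by
  ext a
  obtain ⟨⟨x, φ⟩, rfl⟩ := pi0.mk_surjective a
  simp only [Set.mem_preimage, Set.mem_singleton_iff, Set.mem_range, boundary, pi0Map_mk,
    proj_obj, pi0.mk_eq_mk_iff, nonempty_iso_iff]
  constructor
  · rintro ⟨ψ, u, -⟩
    exact ⟨u.symm⟩
  · rintro ⟨i⟩
    exact ⟨φ ≪≫ f.mapIso i ≪≫ e, i.symm, by ext; simp⟩

lemma range_pi0Map_proj (y₀ : Y) :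
    Set.range (pi0Map (proj f y₀)) = pi0Map f ⁻¹' {pi0.mk y₀} := by
  ext b
  obtain ⟨x, rfl⟩ := pi0.mk_surjective b
  simp only [Set.mem_preimage, Set.mem_singleton_iff, Set.mem_range, pi0Map_mk,
    pi0.mk_eq_mk_iff]
  constructor
  · rintro ⟨a, ha⟩
    obtain ⟨⟨x', φ⟩, rfl⟩ := pi0.mk_surjective a
    obtain ⟨i⟩ := pi0.mk_eq_mk_iff.mp ha
    exact ⟨f.mapIso i.symm ≪≫ φ.symm⟩
  · rintro ⟨j⟩
    exact ⟨pi0.mk ⟨x, j.symm⟩, rfl⟩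

end HomotopyFiber

/-- Exactness of `π₁(X, x₀) → π₁(Y, y₀) → π₀(F) → π₀(X) → π₀(Y)` at the three middle
terms, where the connecting map `∂` sends `ψ : y₀ ≅ y₀` to the class of `(x₀, ψ)`. -/
theorem stmt1 {X : Type u₁} {Y : Type u₂} [Groupoid.{v₁} X] [Groupoid.{v₂} Y]
    (f : X ⥤ Y) (x₀ : X) (y₀ : Y) (h : f.obj x₀ = y₀) :
    -- exactness at π₁(Y, y₀)
    (∀ ψ : Aut y₀,
      pi0.mk (⟨x₀, (ψ : y₀ ≅ y₀) ≪≫ eqToIso h.symm⟩ : HomotopyFiber f y₀) =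
          pi0.mk (HomotopyFiber.base f y₀ x₀ h) ↔
        ∃ u : Aut x₀, (eqToIso h).symm ≪≫ f.mapIso (u : x₀ ≅ x₀) ≪≫ eqToIso h = ψ) ∧
    -- exactness at π₀(F)
    (∀ a : pi0 (HomotopyFiber f y₀),
      pi0Map (HomotopyFiber.proj f y₀) a = pi0.mk x₀ ↔
        ∃ ψ : Aut y₀,
          pi0.mk (⟨x₀, (ψ : y₀ ≅ y₀) ≪≫ eqToIso h.symm⟩ : HomotopyFiber f y₀) = a) ∧
    -- exactness at π₀(X)
    (∀ b : pi0 X, pi0Map f b = pi0.mk y₀ ↔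
        ∃ a : pi0 (HomotopyFiber f y₀), pi0Map (HomotopyFiber.proj f y₀) a = b) :=
  ⟨fun ψ => Set.ext_iff.mp (HomotopyFiber.boundary_preimage_base f x₀ (eqToIso h)) ψ,
    fun a => (Set.ext_iff.mp (HomotopyFiber.range_boundary f x₀ (eqToIso h)) a).symm,
    fun b => (Set.ext_iff.mp (HomotopyFiber.range_pi0Map_proj f y₀) b).symm⟩
end

section
/- Let T be a triangulated category with shift Σ and let (T_{≥0}, T_{≤0}) be a t-structure on T with heart H and homological functors π_n : T → H (n ∈ ℤ). Suppose Q is an object of T_{≤0} such that Hom_T(X, Σ Q) = 0 for all X ∈ T_{≤0} (a t-injective object), and suppose the t-structure is non-degenerate. If E is t-injective and π₀(E) is an injective cogenerator of H (i.e., Hom_H(A, π₀(E)) = 0 implies A ≅ 0), then for every object X and integer n one has Hom_T(X, Σⁿ E) = 0 if and only if πₙ(X) ≅ 0. -/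
/-!
Shifting reduces everything to `n = 0`. Since `E ∈ T_{≤0}`, maps `X ⟶ E` are maps
`τ_{≤0}X ⟶ E`. Let `A ⟶ τ_{≤0}X ⟶ B ⟶ A⟦1⟧` be the truncation triangle, `A ∈ T_{≥0}`,
`B ∈ T_{≤-1}`; then `A` lies in the heart. T-injectivity of `E` kills all maps from `T_{≤-1}`
to `E`, so restriction along `A ⟶ τ_{≤0}X` identifies `Hom(τ_{≤0}X, E)` with
`Hom(A, E) = Hom_H(A, π₀E)`, which vanishes iff `A ≅ 0` because `π₀E` is a cogenerator.
Dually, maps from the heart into `B` and `B⟦-1⟧` vanish, so `A` and `τ_{≤0}X` receive the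
same maps from the heart, i.e. `A ≅ π₀(τ_{≤0}X) ≅ π₀X`.
-/

open CategoryTheory Limits Pretriangulated

universe u v w

variable (C : Type u) [Category.{v} C] [Preadditive C] [HasZeroObject C] [HasShift C ℤ]
  [∀ n : ℤ, (shiftFunctor C n).Additive] [Pretriangulated C]

/-- A t-structure on a (pre)triangulated category `C`, in homological notation:
`ge n X` means `X ∈ C_{≥ n}` and `le n X` means `X ∈ C_{≤ n}`. -/
structure HomTStructure where
  ge : ℤ → C → Prop
  le : ℤ → C → Prop
  ge_iso : ∀ (n : ℤ) {X Y : C}, (X ≅ Y) → ge n X → ge n Y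
  le_iso : ∀ (n : ℤ) {X Y : C}, (X ≅ Y) → le n X → le n Y
  ge_shift : ∀ (n k : ℤ) (X : C), ge n X → ge (n + k) (X⟦k⟧)
  le_shift : ∀ (n k : ℤ) (X : C), le n X → le (n + k) (X⟦k⟧)
  ge_mono : ∀ (m n : ℤ), m ≤ n → ∀ X : C, ge n X → ge m X
  le_mono : ∀ (m n : ℤ), n ≤ m → ∀ X : C, le n X → le m X
  hom_zero : ∀ {X Y : C}, ge 0 X → le (-1) Y → ∀ f : X ⟶ Y, f = 0
  trunc : ∀ X : C, ∃ (A B : C) (f : A ⟶ X) (g : X ⟶ B) (h : B ⟶ A⟦(1 : ℤ)⟧),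
    ge 0 A ∧ le (-1) B ∧ Triangle.mk f g h ∈ distTriang C

variable {C}

/-- Data exhibiting the heart `H` of a t-structure (embedded via `ι`, with essential
image `C_{≥0} ∩ C_{≤0}`) together with the homological functors `πₙ : C ⥤ H`
(`πₙ = π₀ ∘ Σ⁻ⁿ`), where `π₀ = τ_{≥0} τ_{≤0}` is characterized by the usual partial
adjunction properties on the aisle and the coaisle and by compatibility with the
coaisle truncation `τ = τ_{≤0}`. -/
structure HomologyData (t : HomTStructure C) (H : Type w) [Category.{v} H] [Abelian H] where
  ι : H ⥤ C
  ιFull : ι.Full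
  ιFaithful : ι.Faithful
  essImage : ∀ X : C, (∃ A : H, Nonempty (ι.obj A ≅ X)) ↔ (t.ge 0 X ∧ t.le 0 X)
  π : ℤ → C ⥤ H
  πAdditive : ∀ n : ℤ, (π n).Additive
  πShift : ∀ n : ℤ, π n ≅ shiftFunctor C (-n) ⋙ π 0
  πHeart : ∀ A : H, (π 0).obj (ι.obj A) ≅ A
  adj_ge : ∀ X : C, t.ge 0 X → ∀ A : H,
    Function.Bijective (fun f : X ⟶ ι.obj A => (π 0).map f ≫ (πHeart A).hom)
  adj_le : ∀ X : C, t.le 0 X → ∀ A : H,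
    Function.Bijective (fun f : ι.obj A ⟶ X => (πHeart A).inv ≫ (π 0).map f)
  τ : C ⥤ C
  η : 𝟭 C ⟶ τ
  τ_le : ∀ X : C, t.le 0 (τ.obj X)
  τ_adj : ∀ (X Y : C), t.le 0 Y →
    Function.Bijective (fun g : τ.obj X ⟶ Y => η.app X ≫ g)
  π_η : ∀ X : C, IsIso ((π 0).map (η.app X))

lemma CategoryTheory.isZero_iff_of_homEquiv {D : Type*} [Category D] [HasZeroMorphisms D]
    {M N : D} (e : ∀ A : D, (A ⟶ M) ≃ (A ⟶ N)) : IsZero M ↔ IsZero N := by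
  have transfer : ∀ {M N : D}, (∀ A : D, (A ⟶ M) ≃ (A ⟶ N)) → IsZero M → IsZero N :=
    fun {M N} e hM =>
      have : Subsingleton (N ⟶ M) := ⟨hM.eq_of_tgt⟩
      (IsZero.iff_id_eq_zero N).2 (@Subsingleton.elim _ (e N).symm.subsingleton _ _)
  exact ⟨transfer e, transfer fun A => (e A).symm⟩

namespace CategoryTheory.Pretriangulated

variable {T : Triangle C} (hT : T ∈ distTriang C)
include hT

lemma bijective_mor₁_comp {E : C} (h₃ : ∀ w : T.obj₃ ⟶ E, w = 0)
    (h₃' : ∀ w : T.obj₃⟦(-1 : ℤ)⟧ ⟶ E, w = 0) :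
    Function.Bijective (fun u : T.obj₂ ⟶ E => T.mor₁ ≫ u) := by
  refine ⟨(injective_iff_map_eq_zero (Preadditive.leftComp E T.mor₁)).2 fun u hu => ?_,
    fun v => ?_⟩
  · obtain ⟨w, rfl⟩ := T.yoneda_exact₂ hT u hu
    obtain rfl : w = 0 := h₃ w
    exact comp_zero
  · obtain ⟨u, hu⟩ := Triangle.yoneda_exact₂ _ (inv_rot_of_distTriang _ hT) v (h₃' _)
    exact ⟨u, hu.symm⟩

lemma bijective_comp_mor₁ {W : C} (h₃ : ∀ w : W ⟶ T.obj₃, w = 0)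
    (h₃' : ∀ w : W ⟶ T.obj₃⟦(-1 : ℤ)⟧, w = 0) :
    Function.Bijective (fun v : W ⟶ T.obj₁ => v ≫ T.mor₁) := by
  refine ⟨(injective_iff_map_eq_zero (Preadditive.rightComp W T.mor₁)).2 fun v hv => ?_,
    fun u => ?_⟩
  · obtain ⟨w, rfl⟩ := Triangle.coyoneda_exact₂ _ (inv_rot_of_distTriang _ hT) v hv
    obtain rfl : w = 0 := h₃' w
    exact zero_comp
  · obtain ⟨v, hv⟩ := T.coyoneda_exact₂ hT u (h₃ _)
    exact ⟨v, hv.symm⟩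

end CategoryTheory.Pretriangulated

namespace HomTStructure

variable (t : HomTStructure C)

lemma ge_shift_of_add_eq {n k m : ℤ} (h : n + k = m) {X : C} (hX : t.ge n X) :
    t.ge m (X⟦k⟧) :=
  h ▸ t.ge_shift n k X hX

lemma le_shift_of_add_eq {n k m : ℤ} (h : n + k = m) {X : C} (hX : t.le n X) :
    t.le m (X⟦k⟧) :=
  h ▸ t.le_shift n k X hX

variable {t}

lemma hom_eq_zero_of_lt {a b : ℤ} (hab : b < a) {X Y : C} (hX : t.ge a X) (hY : t.le b Y)
    (f : X ⟶ Y) : f = 0 :=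
  (shiftFunctor C (-1 - b)).map_injective <| by
    rw [Functor.map_zero]
    exact t.hom_zero (t.ge_mono 0 _ (by omega) _ (t.ge_shift a (-1 - b) X hX))
      (t.le_shift_of_add_eq (by omega) hY) _

lemma le_zero_of_forall_hom_eq_zero {X : C} (h : ∀ W : C, t.ge 1 W → ∀ u : W ⟶ X, u = 0) :
    t.le 0 X := by
  obtain ⟨A, B, f, g, δ, hA, hB, hT⟩ := t.trunc (X⟦(-1 : ℤ)⟧)
  have hf : f = 0 := (shiftFunctor C (1 : ℤ)).map_injective <| by
    rw [Functor.map_zero, ← cancel_mono (shiftNegShift X (1 : ℤ)).hom, zero_comp]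
    exact h _ (t.ge_shift_of_add_eq (by omega) hA) _
  have hA₀ : IsZero A := by
    obtain ⟨w, hw⟩ := Triangle.coyoneda_exact₂ _ (inv_rot_of_distTriang _ hT) (𝟙 A)
      ((Category.id_comp f).trans hf)
    obtain rfl : w = 0 :=
      hom_eq_zero_of_lt (by omega) hA (t.le_shift_of_add_eq (m := -2) (by omega) hB) w
    exact (IsZero.iff_id_eq_zero A).2 (hw.trans zero_comp)
  have : IsIso g := (Triangle.isZero₁_iff_isIso₂ _ hT).1 hA₀
  exact t.le_iso 0 (shiftNegShift X (1 : ℤ))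
    (t.le_shift_of_add_eq (by omega) (t.le_iso (-1) (asIso g).symm hB))

lemma le_zero_of_distTriang {A Y B : C} {f : A ⟶ Y} {g : Y ⟶ B} {δ : B ⟶ A⟦(1 : ℤ)⟧}
    (hT : Triangle.mk f g δ ∈ distTriang C) (hY : t.le 0 Y) (hB : t.le (-1) B) : t.le 0 A :=
  t.le_zero_of_forall_hom_eq_zero fun W hW u => by
    obtain ⟨w, rfl⟩ := Triangle.coyoneda_exact₂ _ (inv_rot_of_distTriang _ hT) u
      (hom_eq_zero_of_lt (by omega) hW hY _)
    obtain rfl : w = 0 :=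
      hom_eq_zero_of_lt (by omega) hW (t.le_shift_of_add_eq (m := -2) (by omega) hB) w
    exact zero_comp

lemma hom_eq_zero_of_le_neg_one {E : C}
    (hE : ∀ X : C, t.le 0 X → ∀ f : X ⟶ E⟦(1 : ℤ)⟧, f = 0) {Z : C} (hZ : t.le (-1) Z)
    (w : Z ⟶ E) : w = 0 :=
  (shiftFunctor C (1 : ℤ)).map_injective <| by
    rw [Functor.map_zero]
    exact hE _ (t.le_shift_of_add_eq (by omega) hZ) _

end HomTStructure

namespace HomologyData

variable {t : HomTStructure C} {H : Type w} [Category.{v} H] [Abelian H] (d : HomologyData t H)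

lemma ge_zero_ι_obj (A : H) : t.ge 0 (d.ι.obj A) :=
  ((d.essImage _).1 ⟨A, ⟨Iso.refl _⟩⟩).1

lemma isZero_iff_isZero_π_zero_of_distTriang {A Y B : C} {f : A ⟶ Y} {g : Y ⟶ B}
    {δ : B ⟶ A⟦(1 : ℤ)⟧} (hT : Triangle.mk f g δ ∈ distTriang C) (hY : t.le 0 Y)
    (hB : t.le (-1) B) {A₀ : H} (e : d.ι.obj A₀ ≅ A) :
    IsZero A₀ ↔ IsZero ((d.π 0).obj Y) := by
  have := d.ιFull
  have := d.ιFaithful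
  refine isZero_iff_of_homEquiv fun A' => ?_
  have hA' := d.ge_zero_ι_obj A'
  have hB' : t.le (-2) (B⟦(-1 : ℤ)⟧) := t.le_shift_of_add_eq (by omega) hB
  exact (Functor.FullyFaithful.ofFullyFaithful d.ι).homEquiv.trans <|
    ((Iso.refl _).homCongr e).trans <|
    (Equiv.ofBijective _ (bijective_comp_mor₁ hT (HomTStructure.hom_eq_zero_of_lt
      (by omega) hA' hB) (HomTStructure.hom_eq_zero_of_lt (by omega) hA' hB'))).trans <|
    Equiv.ofBijective _ (d.adj_le Y hY A')

lemma forall_hom_eq_zero_iff_isZero_π_zero {E : C} (hE₁ : t.le 0 E)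
    (hE₂ : ∀ X : C, t.le 0 X → ∀ f : X ⟶ E⟦(1 : ℤ)⟧, f = 0)
    (hcog : ∀ A : H, (∀ g : A ⟶ (d.π 0).obj E, g = 0) → IsZero A) (X : C) :
    (∀ f : X ⟶ E, f = 0) ↔ IsZero ((d.π 0).obj X) := by
  obtain ⟨A, B, f, g, δ, hA, hB, hT⟩ := t.trunc (d.τ.obj X)
  obtain ⟨A₀, ⟨e⟩⟩ := (d.essImage A).2 ⟨hA, t.le_zero_of_distTriang hT (d.τ_le X) hB⟩
  have hB' : t.le (-1) (B⟦(-1 : ℤ)⟧) :=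
    t.le_mono _ (-2) (by omega) _ (t.le_shift_of_add_eq (by omega) hB)
  have := d.π_η X
  calc (∀ f : X ⟶ E, f = 0) ↔ Subsingleton (X ⟶ E) := (subsingleton_iff_forall_eq 0).symm
    _ ↔ Subsingleton (d.τ.obj X ⟶ E) :=
      (Equiv.ofBijective _ (d.τ_adj X E hE₁)).subsingleton_congr.symm
    _ ↔ Subsingleton (A ⟶ E) :=
      (Equiv.ofBijective _ (bijective_mor₁_comp hT (t.hom_eq_zero_of_le_neg_one hE₂ hB)
        (t.hom_eq_zero_of_le_neg_one hE₂ hB'))).subsingleton_congr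
    _ ↔ Subsingleton (A₀ ⟶ (d.π 0).obj E) :=
      ((e.homCongr (Iso.refl E)).symm.trans
        (Equiv.ofBijective _ (d.adj_le E hE₁ A₀))).subsingleton_congr
    _ ↔ IsZero A₀ := ⟨fun _ => hcog A₀ fun g => Subsingleton.elim g 0, fun h => ⟨h.eq_of_src⟩⟩
    _ ↔ IsZero ((d.π 0).obj (d.τ.obj X)) :=
      d.isZero_iff_isZero_π_zero_of_distTriang hT (d.τ_le X) hB e
    _ ↔ IsZero ((d.π 0).obj X) := (asIso ((d.π 0).map (d.η.app X))).isZero_iff.symm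

end HomologyData

/-- for a non-degenerate t-structure and a t-injective object `E` whose
image `π₀(E)` is an injective cogenerator of the heart, one has, for every object `X`
and every integer `n`: `Hom_T(X, Σⁿ E) = 0` iff `πₙ(X) ≅ 0`. -/
theorem stmt10 {C : Type u} [Category.{v} C] [Preadditive C] [HasZeroObject C]
    [HasShift C ℤ] [∀ n : ℤ, (shiftFunctor C n).Additive] [Pretriangulated C]
    (t : HomTStructure C) (H : Type w) [Category.{v} H] [Abelian H]
    (d : HomologyData t H)
    -- the t-structure is non-degenerate
    (hnd₁ : ∀ X : C, (∀ n : ℤ, t.ge n X) → IsZero X)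
    (hnd₂ : ∀ X : C, (∀ n : ℤ, t.le n X) → IsZero X)
    -- `E` is t-injective
    (E : C) (hE₁ : t.le 0 E)
    (hE₂ : ∀ X : C, t.le 0 X → ∀ f : X ⟶ E⟦(1 : ℤ)⟧, f = 0)
    -- `π₀(E)` is an injective cogenerator of the heart
    (hcog : ∀ A : H, (∀ g : A ⟶ (d.π 0).obj E, g = 0) → IsZero A) :
    ∀ (X : C) (n : ℤ), (∀ f : X ⟶ E⟦n⟧, f = 0) ↔ IsZero ((d.π n).obj X) := by
  intro X n
  have e : (X⟦-n⟧ ⟶ E) ≃ (X ⟶ E⟦n⟧) :=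
    (shiftEquiv' C (-n) n (neg_add_cancel n)).toAdjunction.homEquiv X E
  calc (∀ f : X ⟶ E⟦n⟧, f = 0) ↔ Subsingleton (X ⟶ E⟦n⟧) :=
        (subsingleton_iff_forall_eq 0).symm
    _ ↔ Subsingleton (X⟦-n⟧ ⟶ E) := e.subsingleton_congr.symm
    _ ↔ IsZero ((d.π 0).obj (X⟦-n⟧)) := (subsingleton_iff_forall_eq 0).trans
      (d.forall_hom_eq_zero_iff_isZero_π_zero hE₁ hE₂ hcog _)
    _ ↔ IsZero ((d.π n).obj X) := ((d.πShift n).app X).isZero_iff.symm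
end

section
/- Let T be a triangulated category with a non-degenerate t-structure (T_{≥0}, T_{≤0}) with heart H, and let E be a t-injective object such that π₀(E) is an injective cogenerator of H. Then T_{≥0} = {X : Hom_T(X, Σⁿ E) = 0 for all n < 0} and T_{≤0} = {X : Hom_T(X, Σⁿ E) = 0 for all n > 0}; i.e., E is a cosilting object determining the t-structure. -/
open CategoryTheory Limits Pretriangulated

universe u v w

variable (C : Type u) [Category.{v} C] [Preadditive C] [HasZeroObject C] [HasShift C ℤ]
  [∀ n : ℤ, (shiftFunctor C n).Additive] [Pretriangulated C]

variable {C}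

/-!
Transport everything to Mathlib's cohomologically indexed `TStructure`, where `E ∈ D^{≥0}`.
The key step: if `Z ∈ D^{≥k}` has no nonzero map to `E[-k]`, then neither has its heart part
`τ^{≤k} Z`, because t-injectivity kills maps out of `τ^{>k} Z`; as `π₀ E` cogenerates the heart,
`τ^{≤k} Z = 0`, i.e. `Z ∈ D^{≥k+1}`. Dually, if `W ∈ D^{≤k}` has no nonzero map to `E[-k]`, every
map from `W` to an object of `D^{≥k}` factors through a heart object and vanishes, so
`W ∈ D^{≤k-1}`. Iterating these steps on the truncation pieces of `X` pushes them into every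
`D^{≥n}` (resp. every `D^{≤n}`), so they vanish by non-degeneracy.
-/

open Triangulated

section ShiftHom

variable {C : Type u} [Category.{v} C] [Preadditive C] [HasShift C ℤ]
  [∀ n : ℤ, (shiftFunctor C n).Additive]

lemma forall_hom_eq_zero_of_shift (a : ℤ) {X Y X' Y' : C} (eX : X⟦a⟧ ≅ X') (eY : Y⟦a⟧ ≅ Y')
    (h : ∀ f : X' ⟶ Y', f = 0) (f : X ⟶ Y) : f = 0 := by
  apply (shiftFunctor C a).map_injective
  simpa using h (eX.inv ≫ f⟦a⟧' ≫ eY.hom)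

end ShiftHom

namespace HomTStructure

variable {C : Type u} [Category.{v} C] [Preadditive C] [HasZeroObject C] [HasShift C ℤ]
  [∀ n : ℤ, (shiftFunctor C n).Additive] [Pretriangulated C] (t : HomTStructure C)

/-- Mathlib indexes t-structures cohomologically: `C_{≥n}` is `D^{≤-n}` and `C_{≤n}` is
`D^{≥-n}`. -/
def toTStructure : TStructure C where
  le n := t.ge (-n)
  ge n := t.le (-n)
  le_isClosedUnderIsomorphisms n := ⟨fun e => t.ge_iso _ e⟩
  ge_isClosedUnderIsomorphisms n := ⟨fun e => t.le_iso _ e⟩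
  le_shift n a n' h X hX := by
    rw [show -n' = -n + a by omega]
    exact t.ge_shift _ a X hX
  ge_shift n a n' h X hX := by
    rw [show -n' = -n + a by omega]
    exact t.le_shift _ a X hX
  zero' _ _ f hX hY := t.hom_zero hX hY f
  le_zero_le := t.ge_mono (-1) 0 (by omega)
  ge_one_le := t.le_mono 0 (-1) (by omega)
  exists_triangle_zero_one X := by
    obtain ⟨A, B, f, g, h, hA, hB, hT⟩ := t.trunc X
    exact ⟨A, B, hA, hB, f, g, h, hT⟩

end HomTStructure

namespace CategoryTheory.Pretriangulated

variable {C : Type u} [Category.{v} C] [Preadditive C] [HasZeroObject C] [HasShift C ℤ]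
  [∀ n : ℤ, (shiftFunctor C n).Additive] [Pretriangulated C]

lemma from_obj₂_eq_zero (T : Triangle C) (hT : T ∈ distTriang C) {Y : C}
    (h₁ : ∀ f : T.obj₁ ⟶ Y, f = 0) (h₃ : ∀ f : T.obj₃ ⟶ Y, f = 0) (f : T.obj₂ ⟶ Y) : f = 0 := by
  obtain ⟨g, rfl⟩ := Triangle.yoneda_exact₂ T hT f (h₁ _)
  rw [h₃ g, comp_zero]

lemma to_obj₂_eq_zero (T : Triangle C) (hT : T ∈ distTriang C) {W : C}
    (h₁ : ∀ f : W ⟶ T.obj₁, f = 0) (h₃ : ∀ f : W ⟶ T.obj₃, f = 0) (f : W ⟶ T.obj₂) : f = 0 := by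
  obtain ⟨g, rfl⟩ := Triangle.coyoneda_exact₂ T hT f (h₃ _)
  rw [h₁ g, zero_comp]

end CategoryTheory.Pretriangulated

namespace CategoryTheory.Triangulated.TStructure

variable {C : Type u} [Category.{v} C] [Preadditive C] [HasZeroObject C] [HasShift C ℤ]
  [∀ n : ℤ, (shiftFunctor C n).Additive] [Pretriangulated C] (t : TStructure C)

structure IsTInjective (E : C) : Prop where
  isGE : t.IsGE E 0
  hom_eq_zero : ∀ X : C, t.IsGE X 0 → ∀ f : X ⟶ E⟦(1 : ℤ)⟧, f = 0

-- This is what `π₀ E` being a cogenerator of the heart gives, as `Hom(W, A) = Hom(π₀ W, A)`.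
def CogeneratesHeart (E : C) : Prop :=
  ∀ ⦃W A : C⦄, t.IsLE W 0 → t.IsLE A 0 → t.IsGE A 0 → (∀ f : W ⟶ E, f = 0) →
    ∀ g : W ⟶ A, g = 0

-- `triangleLTGE_distinguished` with the triangle spelled out, so that instance search sees its
-- objects.
lemma truncLT_truncGE_distinguished (n : ℤ) (X : C) :
    Triangle.mk ((t.truncLTι n).app X) ((t.truncGEπ n).app X) ((t.truncGEδLT n).app X) ∈
      distTriang C :=
  t.triangleLTGE_distinguished n X

lemma isGE_truncLT_obj_of_isGE (Y : C) (n k : ℤ) [t.IsGE Y k] :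
    t.IsGE ((t.truncLT n).obj Y) k := by
  have := t.isGE_shift ((t.truncGE n).obj Y) k (-1) (k + 1)
  have hB : t.IsGE (((t.truncGE n).obj Y)⟦(-1 : ℤ)⟧) k := t.isGE_of_ge _ k (k + 1)
  exact t.isGE₂ _ (inv_rot_of_distTriang _ (t.truncLT_truncGE_distinguished n Y)) k hB ‹_›

variable {t} {E : C}

lemma IsTInjective.hom_shift_eq_zero (hE : t.IsTInjective E) {X : C} {k n : ℤ}
    (hkn : 1 ≤ k + n) [t.IsGE X k] (f : X ⟶ E⟦n⟧) : f = 0 := by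
  have := t.isGE_of_ge X (1 - n) k
  have := t.isGE_shift X (1 - n) (1 - n) 0
  exact forall_hom_eq_zero_of_shift (1 - n) (Iso.refl _)
    ((shiftFunctorAdd' C n (1 - n) 1 (by omega)).symm.app E) (hE.hom_eq_zero _ inferInstance) f

lemma CogeneratesHeart.hom_eq_zero (hE : t.CogeneratesHeart E) (k : ℤ) {W A : C}
    [t.IsLE W k] [t.IsLE A k] [t.IsGE A k] (hW : ∀ f : W ⟶ E⟦-k⟧, f = 0) (g : W ⟶ A) :
    g = 0 := by
  refine forall_hom_eq_zero_of_shift k (Iso.refl _) (Iso.refl _)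
    (hE (t.isLE_shift W k k 0) (t.isLE_shift A k k 0) (t.isGE_shift A k k 0) ?_) g
  exact forall_hom_eq_zero_of_shift (-k)
    ((shiftFunctorCompIsoId C k (-k) (add_neg_cancel k)).app W) (Iso.refl _) hW

lemma isGE_add_one_of_hom_eq_zero (hinj : t.IsTInjective E) (hcog : t.CogeneratesHeart E)
    {Z : C} (k : ℤ) [t.IsGE Z k] (hZ : ∀ f : Z ⟶ E⟦-k⟧, f = 0) : t.IsGE Z (k + 1) := by
  have := t.isGE_truncLT_obj_of_isGE Z (k + 1) k
  have := t.isGE_shift ((t.truncGE (k + 1)).obj Z) (k + 1) (-1) (k + 2)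
  have hA : ∀ f : (t.truncLT (k + 1)).obj Z ⟶ E⟦-k⟧, f = 0 :=
    from_obj₂_eq_zero _ (inv_rot_of_distTriang _ (t.truncLT_truncGE_distinguished (k + 1) Z))
      (hinj.hom_shift_eq_zero (X := ((t.truncGE (k + 1)).obj Z)⟦(-1 : ℤ)⟧) (k := k + 2)
        (by omega)) hZ
  rw [t.isGE_iff_isZero_truncLT_obj, IsZero.iff_id_eq_zero]
  exact hcog.hom_eq_zero k hA _

lemma isLE_sub_one_of_hom_eq_zero (hcog : t.CogeneratesHeart E) {W : C} (k : ℤ) [t.IsLE W k]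
    (hW : ∀ f : W ⟶ E⟦-k⟧, f = 0) : t.IsLE W (k - 1) := by
  rw [t.isLE_iff_orthogonal (k - 1) k (by omega)]
  intro Y f _
  have := t.isGE_truncLT_obj_of_isGE Y (k + 1) k
  exact to_obj₂_eq_zero _ (t.truncLT_truncGE_distinguished (k + 1) Y)
    (hcog.hom_eq_zero (A := (t.truncLT (k + 1)).obj Y) k hW)
    (t.zero (Y := (t.truncGE (k + 1)).obj Y) · k (k + 1)) f

lemma isZero_of_isGE_of_hom_eq_zero (hinj : t.IsTInjective E) (hcog : t.CogeneratesHeart E)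
    (hnd : ∀ X : C, (∀ n : ℤ, t.IsGE X n) → IsZero X) {Z : C} (k₀ : ℤ) [t.IsGE Z k₀]
    (hZ : ∀ k, k₀ ≤ k → ∀ f : Z ⟶ E⟦-k⟧, f = 0) : IsZero Z := by
  have hge : ∀ k, k₀ ≤ k → t.IsGE Z k := by
    intro k hk
    induction k, hk using Int.leInduction with
    | base => assumption
    | succ k hk ih => exact isGE_add_one_of_hom_eq_zero hinj hcog k (hZ k hk)
  refine hnd Z fun n => ?_
  have := hge (max n k₀) (le_max_right n k₀)
  exact t.isGE_of_ge Z n (max n k₀) (le_max_left n k₀)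

lemma isZero_of_isLE_of_hom_eq_zero (hcog : t.CogeneratesHeart E)
    (hnd : ∀ X : C, (∀ n : ℤ, t.IsLE X n) → IsZero X) {W : C} (k₀ : ℤ) [t.IsLE W k₀]
    (hW : ∀ k, k ≤ k₀ → ∀ f : W ⟶ E⟦-k⟧, f = 0) : IsZero W := by
  have hle : ∀ k, k ≤ k₀ → t.IsLE W k := by
    intro k hk
    induction k, hk using Int.leInductionDown with
    | base => assumption
    | pred k hk ih => exact isLE_sub_one_of_hom_eq_zero hcog k (hW k hk)
  refine hnd W fun n => ?_
  have := hle (min n k₀) (min_le_right n k₀)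
  exact t.isLE_of_le W (min n k₀) n (min_le_left n k₀)

lemma isLE_zero_iff_hom_shift_eq_zero (hinj : t.IsTInjective E) (hcog : t.CogeneratesHeart E)
    (hnd : ∀ X : C, (∀ n : ℤ, t.IsGE X n) → IsZero X) (X : C) :
    t.IsLE X 0 ↔ ∀ n : ℤ, n < 0 → ∀ f : X ⟶ E⟦n⟧, f = 0 := by
  have := hinj.isGE
  constructor
  · intro _ n hn f
    have := t.isGE_shift E 0 n (-n)
    exact t.zero f 0 (-n)
  · intro hX
    rw [t.isLE_iff_isZero_truncGE_obj 0 1 rfl]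
    refine isZero_of_isGE_of_hom_eq_zero hinj hcog hnd 1 fun k hk => ?_
    have := t.isGE_shift E 0 (-k) k
    have := t.isLE_shift ((t.truncLT 1).obj X) (1 - 1) 1 (-1)
    exact from_obj₂_eq_zero _ (rot_of_distTriang _ (t.truncLT_truncGE_distinguished 1 X))
      (hX (-k) (by omega)) (t.zero (X := ((t.truncLT 1).obj X)⟦(1 : ℤ)⟧) · (-1) k)

lemma isGE_zero_iff_hom_shift_eq_zero (hinj : t.IsTInjective E) (hcog : t.CogeneratesHeart E)
    (hnd : ∀ X : C, (∀ n : ℤ, t.IsLE X n) → IsZero X) (X : C) :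
    t.IsGE X 0 ↔ ∀ n : ℤ, 0 < n → ∀ f : X ⟶ E⟦n⟧, f = 0 := by
  constructor
  · intro _ n hn f
    exact hinj.hom_shift_eq_zero (k := 0) (by omega) f
  · intro hX
    rw [t.isGE_iff_isZero_truncLT_obj]
    refine isZero_of_isLE_of_hom_eq_zero hcog hnd (0 - 1) fun k hk => ?_
    have := t.isGE_shift ((t.truncGE 0).obj X) 0 (-1) 1
    exact from_obj₂_eq_zero _ (inv_rot_of_distTriang _ (t.truncLT_truncGE_distinguished 0 X))
      (hinj.hom_shift_eq_zero (X := ((t.truncGE 0).obj X)⟦(-1 : ℤ)⟧) (k := 1) (by omega))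
      (hX (-k) (by omega))

end CategoryTheory.Triangulated.TStructure

namespace HomologyData

variable {C : Type u} [Category.{v} C] [Preadditive C] [HasZeroObject C] [HasShift C ℤ]
  [∀ n : ℤ, (shiftFunctor C n).Additive] [Pretriangulated C] {t : HomTStructure C}
  {H : Type w} [Category.{v} H] [Abelian H] (d : HomologyData t H)

lemma isZero_π_zero_obj_of_hom_eq_zero {E : C} (hE : t.le 0 E)
    (hcog : ∀ A : H, (∀ g : A ⟶ (d.π 0).obj E, g = 0) → IsZero A) {X : C} (hX : t.ge 0 X)
    (h : ∀ f : X ⟶ E, f = 0) : IsZero ((d.π 0).obj X) := by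
  have := d.πAdditive 0
  refine hcog _ fun g => ?_
  obtain ⟨f₁, rfl⟩ := (d.adj_ge X hX _).2 g
  obtain ⟨f₂, hf₂ : (d.πHeart _).inv ≫ (d.π 0).map f₂ = 𝟙 _⟩ := (d.adj_le E hE _).2 (𝟙 _)
  calc (d.π 0).map f₁ ≫ (d.πHeart _).hom
      = (d.π 0).map f₁ ≫ (d.πHeart _).hom ≫ (d.πHeart _).inv ≫ (d.π 0).map f₂ := by
        rw [hf₂, Category.comp_id]
    _ = (d.π 0).map (f₁ ≫ f₂) := by simp
    _ = 0 := by rw [h (f₁ ≫ f₂), Functor.map_zero]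

lemma hom_eq_zero_of_isZero_π_zero_obj {W A : C} (hW : t.ge 0 W) (hA : t.ge 0 A ∧ t.le 0 A)
    (hπ : IsZero ((d.π 0).obj W)) (g : W ⟶ A) : g = 0 := by
  obtain ⟨A₀, ⟨e⟩⟩ := (d.essImage A).2 hA
  have : g ≫ e.inv = 0 := (d.adj_ge W hW A₀).1 (hπ.eq_of_src _ _)
  simpa using this

lemma cogeneratesHeart {E : C} (hE : t.le 0 E)
    (hcog : ∀ A : H, (∀ g : A ⟶ (d.π 0).obj E, g = 0) → IsZero A) :
    t.toTStructure.CogeneratesHeart E := fun _ _ hW hA₁ hA₂ hWE =>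
  d.hom_eq_zero_of_isZero_π_zero_obj hW.1 ⟨hA₁.1, hA₂.1⟩
    (d.isZero_π_zero_obj_of_hom_eq_zero hE hcog hW.1 hWE)

end HomologyData

/-- for a non-degenerate t-structure and a t-injective object `E` with
`π₀(E)` an injective cogenerator of the heart, `E` is a cosilting object determining
the t-structure: `T_{≥0} = {X : Hom(X, Σⁿ E) = 0 for all n < 0}` and
`T_{≤0} = {X : Hom(X, Σⁿ E) = 0 for all n > 0}`. -/
theorem stmt11 {C : Type u} [Category.{v} C] [Preadditive C] [HasZeroObject C]
    [HasShift C ℤ] [∀ n : ℤ, (shiftFunctor C n).Additive] [Pretriangulated C]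
    (t : HomTStructure C) (H : Type w) [Category.{v} H] [Abelian H]
    (d : HomologyData t H)
    (hnd₁ : ∀ X : C, (∀ n : ℤ, t.ge n X) → IsZero X)
    (hnd₂ : ∀ X : C, (∀ n : ℤ, t.le n X) → IsZero X)
    (E : C) (hE₁ : t.le 0 E)
    (hE₂ : ∀ X : C, t.le 0 X → ∀ f : X ⟶ E⟦(1 : ℤ)⟧, f = 0)
    (hcog : ∀ A : H, (∀ g : A ⟶ (d.π 0).obj E, g = 0) → IsZero A) :
    ∀ X : C,
      (t.ge 0 X ↔ ∀ n : ℤ, n < 0 → ∀ f : X ⟶ E⟦n⟧, f = 0) ∧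
      (t.le 0 X ↔ ∀ n : ℤ, 0 < n → ∀ f : X ⟶ E⟦n⟧, f = 0) := by
  have hinj : t.toTStructure.IsTInjective E := ⟨⟨hE₁⟩, fun X hX => hE₂ X hX.1⟩
  have hcog' := d.cogeneratesHeart hE₁ hcog
  have hnd₁' : ∀ X : C, (∀ n : ℤ, t.toTStructure.IsLE X n) → IsZero X :=
    fun X hX => hnd₁ X fun n => by simpa using (show t.ge (- -n) X from (hX (-n)).1)
  have hnd₂' : ∀ X : C, (∀ n : ℤ, t.toTStructure.IsGE X n) → IsZero X :=
    fun X hX => hnd₂ X fun n => by simpa using (show t.le (- -n) X from (hX (-n)).1)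
  intro X
  exact ⟨(t.toTStructure.le_iff_isLE X 0).trans
      (TStructure.isLE_zero_iff_hom_shift_eq_zero hinj hcog' hnd₂' X),
    (t.toTStructure.ge_iff_isGE X 0).trans
      (TStructure.isGE_zero_iff_hom_shift_eq_zero hinj hcog' hnd₁' X)⟩
end

section
/- Let Q be a t-injective object with respect to a t-structure on a triangulated category T, i.e., Q ∈ T_{≤0} and Hom(X, ΣQ) = 0 for all X ∈ T_{≤0}. Then for every object X of T the canonical map Hom_T(X, Q) → Hom_H(π₀(X), π₀(Q)) induced by the homological functor π₀ is an isomorphism of abelian groups. -/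
open CategoryTheory Limits Pretriangulated

universe u v w

variable (C : Type u) [Category.{v} C] [Preadditive C] [HasZeroObject C] [HasShift C ℤ]
  [∀ n : ℤ, (shiftFunctor C n).Additive] [Pretriangulated C]

variable {C}

/-!
Maps into `Q` factor uniquely through `X → τ_{≤0} X`, which `π₀` inverts, so we may assume
`X ∈ T_{≤0}`. Truncating gives a triangle `A → X → B → A⟦1⟧` with `A = τ_{≥0} X` in the heart
and `B ∈ T_{≤-1}`. Since `Hom(B, Q) = Hom(B⟦-1⟧, Q) = 0` by t-injectivity, maps `X → Q` are the
same as maps `A → Q`; since `Hom(ι M, B) = Hom(ι M, B⟦-1⟧) = 0` for heart objects `M`, `π₀`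
inverts `A → X`. For `A` in the heart the claim is the adjunction `Hom(ι M, Q) ≅ Hom(M, π₀ Q)`.
-/

lemma CategoryTheory.Functor.map_bijective_iff_of_precomp_bijective {D E : Type*} [Category D]
    [Category E] (F : D ⥤ E) {Y Y' Z : D} (a : Y ⟶ Y') [IsIso (F.map a)]
    (ha : Function.Bijective fun g : Y' ⟶ Z => a ≫ g) :
    Function.Bijective (fun f : Y ⟶ Z => F.map f) ↔
      Function.Bijective (fun f : Y' ⟶ Z => F.map f) := by
  have hsq : (fun f : Y ⟶ Z => F.map f) ∘ (fun g => a ≫ g) =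
      (fun φ => F.map a ≫ φ) ∘ (fun f : Y' ⟶ Z => F.map f) := by
    funext g
    exact F.map_comp a g
  rw [← Function.Bijective.of_comp_iff _ ha, hsq]
  exact Function.Bijective.of_comp_iff' (asIso (F.map a)).symm.homFromEquiv.bijective _

namespace CategoryTheory.Pretriangulated

lemma precomp_mor₁_bijective {T : Triangle C} (hT : T ∈ distTriang C) {Z : C}
    (h₃ : ∀ g : T.obj₃ ⟶ Z, g = 0) (h₃' : ∀ g : T.obj₃⟦(-1 : ℤ)⟧ ⟶ Z, g = 0) :
    Function.Bijective fun f : T.obj₂ ⟶ Z => T.mor₁ ≫ f := by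
  refine ⟨fun f₁ f₂ hf => ?_, fun g => ?_⟩
  · have h : T.mor₁ ≫ (f₁ - f₂) = 0 := by rw [Preadditive.comp_sub, sub_eq_zero]; exact hf
    obtain ⟨k, hk⟩ := T.yoneda_exact₂ hT (f₁ - f₂) h
    rw [← sub_eq_zero, hk, h₃ k, comp_zero]
  · obtain ⟨f, hf⟩ := Triangle.yoneda_exact₂ _ (inv_rot_of_distTriang T hT) g (h₃' _)
    exact ⟨f, hf.symm⟩

lemma postcomp_mor₁_bijective {T : Triangle C} (hT : T ∈ distTriang C) {W : C}
    (h₃ : ∀ g : W ⟶ T.obj₃, g = 0) (h₃' : ∀ g : W ⟶ T.obj₃⟦(-1 : ℤ)⟧, g = 0) :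
    Function.Bijective fun f : W ⟶ T.obj₁ => f ≫ T.mor₁ := by
  refine ⟨fun f₁ f₂ hf => ?_, fun g => ?_⟩
  · have h : (f₁ - f₂) ≫ T.mor₁ = 0 := by rw [Preadditive.sub_comp, sub_eq_zero]; exact hf
    obtain ⟨k, hk⟩ := Triangle.coyoneda_exact₂ _ (inv_rot_of_distTriang T hT) (f₁ - f₂) h
    rw [← sub_eq_zero, hk, h₃' k]
    exact zero_comp
  · obtain ⟨f, hf⟩ := T.coyoneda_exact₂ hT g (h₃ _)
    exact ⟨f, hf.symm⟩

end CategoryTheory.Pretriangulated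

namespace HomTStructure

variable (t : HomTStructure C)

lemma le_of_shift {n k : ℤ} {X : C} (h : t.le (n + k) (X⟦k⟧)) : t.le n X := by
  have h' := t.le_shift _ (-k) _ h
  rw [add_neg_cancel_right] at h'
  exact t.le_iso n ((shiftFunctorCompIsoId C k (-k) (add_neg_cancel k)).app X) h'

lemma hom_eq_zero_of_lt_s12 {U V : C} {m n : ℤ} (hU : t.ge n U) (hV : t.le m V) (hmn : m < n)
    (f : U ⟶ V) : f = 0 := by
  have hU' : t.ge 0 (U⟦-n⟧) := by simpa using t.ge_shift n (-n) U hU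
  have hV' : t.le (-1) (V⟦-n⟧) := t.le_mono _ _ (by omega) _ (t.le_shift m (-n) V hV)
  apply (shiftFunctor C (-n)).map_injective
  rw [t.hom_zero hU' hV' ((shiftFunctor C (-n)).map f), Functor.map_zero]

lemma le_neg_one_of_forall_hom_eq_zero {E : C} (h : ∀ W, t.ge 0 W → ∀ g : W ⟶ E, g = 0) :
    t.le (-1) E := by
  obtain ⟨A, B, a, b, c, hA, hB, hT⟩ := t.trunc E
  have hT' := rot_of_distTriang _ hT
  obtain ⟨s, hs⟩ := Triangle.coyoneda_exact₃ _ hT' (𝟙 (A⟦(1 : ℤ)⟧))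
    (show 𝟙 _ ≫ (-(shiftFunctor C (1 : ℤ)).map a) = 0 by
      rw [h A hA a, Functor.map_zero, neg_zero, comp_zero])
  have hA₁ : t.ge 1 (A⟦(1 : ℤ)⟧) := by simpa using t.ge_shift 0 1 A hA
  have hA₁_zero : IsZero (A⟦(1 : ℤ)⟧) := by
    rw [IsZero.iff_id_eq_zero, hs, t.hom_eq_zero_of_lt_s12 hA₁ hB (by omega) s]
    exact zero_comp
  have : IsIso b := (Triangle.isZero₃_iff_isIso₁ _ hT').1 hA₁_zero
  exact t.le_iso (-1) (asIso b).symm hB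

lemma le_of_forall_hom_eq_zero (n : ℤ) {E : C}
    (h : ∀ W, t.ge (n + 1) W → ∀ g : W ⟶ E, g = 0) : t.le n E := by
  have hE : t.le (-1) (E⟦-(n + 1)⟧) := t.le_neg_one_of_forall_hom_eq_zero fun W hW g => by
    have e := (shiftFunctorCompIsoId C (-(n + 1)) (n + 1) (by omega)).app E
    have h' : (shiftFunctor C (n + 1)).map g ≫ e.hom = 0 :=
      h _ (by simpa using t.ge_shift 0 (n + 1) W hW) _
    apply (shiftFunctor C (n + 1)).map_injective
    simpa using h'
  exact t.le_of_shift (k := -(n + 1)) (by convert hE using 2; ring)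

lemma le_of_distinguished {T : Triangle C} (hT : T ∈ distTriang C) {n : ℤ}
    (h₁ : t.le n T.obj₁) (h₃ : t.le n T.obj₃) : t.le n T.obj₂ :=
  t.le_of_forall_hom_eq_zero n fun W hW g => by
    obtain ⟨k, rfl⟩ := T.coyoneda_exact₂ hT g (t.hom_eq_zero_of_lt_s12 hW h₃ (by omega) _)
    rw [t.hom_eq_zero_of_lt_s12 hW h₁ (by omega) k, zero_comp]

lemma hom_eq_zero_of_le_neg_one_s12 {Q : C} (hQ : ∀ X, t.le 0 X → ∀ f : X ⟶ Q⟦(1 : ℤ)⟧, f = 0)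
    {U : C} (hU : t.le (-1) U) (f : U ⟶ Q) : f = 0 :=
  (shiftFunctor C (1 : ℤ)).map_injective <| by
    rw [hQ _ (t.le_shift (-1) 1 U hU) ((shiftFunctor C (1 : ℤ)).map f), Functor.map_zero]

end HomTStructure

namespace HomologyData

variable {t : HomTStructure C} {H : Type w} [Category.{v} H] [Abelian H] (d : HomologyData t H)

lemma map_bijective_of_ge_of_le {Y Q : C} (hY₁ : t.ge 0 Y) (hY₂ : t.le 0 Y) (hQ : t.le 0 Q) :
    Function.Bijective fun f : Y ⟶ Q => (d.π 0).map f := by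
  obtain ⟨M, ⟨e⟩⟩ := (d.essImage Y).2 ⟨hY₁, hY₂⟩
  refine ((d.π 0).map_bijective_iff_of_precomp_bijective e.inv e.homFromEquiv.bijective).2 ?_
  exact (Function.Bijective.of_comp_iff' (d.πHeart M).homFromEquiv.bijective _).1 (d.adj_le Q hQ M)

lemma isIso_map_mor₁ {T : Triangle C} (hT : T ∈ distTriang C) (h₁ : t.le 0 T.obj₁)
    (h₂ : t.le 0 T.obj₂) (h₃ : t.le (-1) T.obj₃) : IsIso ((d.π 0).map T.mor₁) := by
  refine isIso_of_yoneda_map_bijective _ fun M => ?_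
  have hM := ((d.essImage (d.ι.obj M)).1 ⟨M, ⟨Iso.refl _⟩⟩).1
  have h₃' : t.le (-1) (T.obj₃⟦(-1 : ℤ)⟧) := t.le_mono _ _ (by omega) _ (t.le_shift _ (-1) _ h₃)
  have hpost := postcomp_mor₁_bijective hT (t.hom_eq_zero_of_lt_s12 hM h₃ (by omega))
    (t.hom_eq_zero_of_lt_s12 hM h₃' (by omega))
  have hsq : (fun φ => φ ≫ (d.π 0).map T.mor₁) ∘
      (fun g : d.ι.obj M ⟶ T.obj₁ => (d.πHeart M).inv ≫ (d.π 0).map g) =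
      (fun g => (d.πHeart M).inv ≫ (d.π 0).map g) ∘ (fun g => g ≫ T.mor₁) := by
    funext g
    simp
  rw [← Function.Bijective.of_comp_iff _ (d.adj_le _ h₁ M), hsq]
  exact (d.adj_le _ h₂ M).comp hpost

lemma map_bijective_of_le {Q : C} (hQ₁ : t.le 0 Q)
    (hQ₂ : ∀ X : C, t.le 0 X → ∀ f : X ⟶ Q⟦(1 : ℤ)⟧, f = 0) {Y : C} (hY : t.le 0 Y) :
    Function.Bijective fun f : Y ⟶ Q => (d.π 0).map f := by
  obtain ⟨A, B, a, b, c, hA, hB, hT⟩ := t.trunc Y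
  have hB' : t.le (-1) (B⟦(-1 : ℤ)⟧) := t.le_mono _ _ (by omega) _ (t.le_shift _ (-1) _ hB)
  have hA' : t.le 0 A :=
    t.le_of_distinguished (inv_rot_of_distTriang _ hT) (t.le_mono _ _ (by omega) _ hB') hY
  have : IsIso ((d.π 0).map a) := d.isIso_map_mor₁ hT hA' hY hB
  refine ((d.π 0).map_bijective_iff_of_precomp_bijective a (precomp_mor₁_bijective hT
    (t.hom_eq_zero_of_le_neg_one_s12 hQ₂ hB) (t.hom_eq_zero_of_le_neg_one_s12 hQ₂ hB'))).1 ?_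
  exact d.map_bijective_of_ge_of_le hA hA' hQ₁

end HomologyData

/-- if `Q` is t-injective (`Q ∈ T_{≤0}` and `Hom(X, ΣQ) = 0` for all
`X ∈ T_{≤0}`), then for every `X` the canonical map
`Hom_T(X, Q) → Hom_H(π₀ X, π₀ Q)`, `f ↦ π₀(f)`, is an isomorphism of abelian groups
(it is additive and bijective). -/
theorem stmt12 {C : Type u} [Category.{v} C] [Preadditive C] [HasZeroObject C]
    [HasShift C ℤ] [∀ n : ℤ, (shiftFunctor C n).Additive] [Pretriangulated C]
    (t : HomTStructure C) (H : Type w) [Category.{v} H] [Abelian H]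
    (d : HomologyData t H)
    (Q : C) (hQ₁ : t.le 0 Q)
    (hQ₂ : ∀ X : C, t.le 0 X → ∀ f : X ⟶ Q⟦(1 : ℤ)⟧, f = 0) (X : C) :
    (∀ f g : X ⟶ Q, (d.π 0).map (f + g) = (d.π 0).map f + (d.π 0).map g) ∧
    Function.Bijective (fun f : X ⟶ Q => (d.π 0).map f) := by
  have := d.πAdditive 0
  refine ⟨fun f g => (d.π 0).map_add, ?_⟩
  have := d.π_η X
  refine ((d.π 0).map_bijective_iff_of_precomp_bijective _ (d.τ_adj X Q hQ₁)).2 ?_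
  exact d.map_bijective_of_le hQ₁ hQ₂ (d.τ_le X)
end
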